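/- arXiv:1712.04864 — 2 statements merged into one kernel-verified Lean document; each statement's English description precedes it below -/
import Mathlib

section
/- Axiom (ax8) — for every φ : I → Prop, (∀ i, cof (φ i)) → cof (∀ i, φ i) — holds if and only if the class of cofibrations is closed under exponentiation by I: for every cofibration m : X → Y, the map (fun g => m ∘ g) : (I → X) → (I → Y) is a cofibration. -/
/-!
Postcomposition with `m` hits `h : I → Y` exactly when every `h i` lies in the image of `m`
(choose the preimages pointwise), so the image of `m ∘ -` at `h` is the proposition
`∀ i, ∃ x, m x = h i`; (ax8) makes it cofibrant. Conversely, a family `φ` of cofibrant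
propositions makes `Subtype.val : {i // φ i} → I` a cofibration, and the image of its
exponential at `id : I → I` is `∀ i, φ i`.
-/

/-- A function `m : X → Y` is a cofibration (relative to `cof`) if it is injective
and its image is classified by a cofibrant proposition at every point. -/
def IsCofibration (cof : Prop → Prop) {X Y : Type} (m : X → Y) : Prop :=
  Function.Injective m ∧ ∀ y : Y, cof (∃ x, m x = y)

section

variable {I X Y : Type}

theorem exists_comp_eq_iff_forall_exists (m : X → Y) (h : I → Y) :
    (∃ g : I → X, m ∘ g = h) ↔ ∀ i, ∃ x, m x = h i := by
  simp only [funext_iff, Function.comp_apply, Classical.skolem]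

theorem exists_subtype_val_eq_iff (φ : I → Prop) (i : I) :
    (∃ x : {i // φ i}, x.val = i) ↔ φ i :=
  ⟨fun ⟨x, hx⟩ => hx ▸ x.property, fun hi => ⟨⟨i, hi⟩, rfl⟩⟩

theorem isCofibration_subtype_val_iff (cof : Prop → Prop) (φ : I → Prop) :
    IsCofibration cof (Subtype.val : {i // φ i} → I) ↔ ∀ i, cof (φ i) := by
  simp only [IsCofibration, exists_subtype_val_eq_iff, Subtype.val_injective, true_and]

theorem IsCofibration.comp_left {cof : Prop → Prop}
    (ax8 : ∀ φ : I → Prop, (∀ i, cof (φ i)) → cof (∀ i, φ i))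
    {m : X → Y} (hm : IsCofibration cof m) :
    IsCofibration cof (fun g : I → X => m ∘ g) := by
  refine ⟨hm.1.comp_left, fun h => ?_⟩
  rw [exists_comp_eq_iff_forall_exists]
  exact ax8 _ fun i => hm.2 (h i)

theorem cof_forall_of_isCofibration_comp_left {cof : Prop → Prop} {φ : I → Prop}
    (hval : IsCofibration cof (fun g : I → {i // φ i} => Subtype.val ∘ g)) :
    cof (∀ i, φ i) := by
  have hid := hval.2 id
  simp only [exists_comp_eq_iff_forall_exists, id, exists_subtype_val_eq_iff] at hid
  exact hid

end

theorem ax8_iff_cofibrations_closed_under_exponentiation_general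
    (I : Type) (cof : Prop → Prop) :
    (∀ φ : I → Prop, (∀ i, cof (φ i)) → cof (∀ i, φ i)) ↔
      (∀ (X Y : Type) (m : X → Y), IsCofibration cof m →
        IsCofibration cof (fun g : I → X => m ∘ g)) :=
  ⟨fun ax8 _ _ _ hm => hm.comp_left ax8,
    fun hclosed φ hφ => cof_forall_of_isCofibration_comp_left
      (hclosed _ _ _ ((isCofibration_subtype_val_iff cof φ).2 hφ))⟩

/-- Axiom (ax8) holds iff cofibrations are closed under exponentiation by the interval `I`. -/
theorem ax8_iff_cofibrations_closed_under_exponentiation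
    (I : Type) (i0 i1 : I) (cof : Prop → Prop) :
    (∀ φ : I → Prop, (∀ i, cof (φ i)) → cof (∀ i, φ i)) ↔
      (∀ (X Y : Type) (m : X → Y), IsCofibration cof m →
        IsCofibration cof (fun g : I → X => m ∘ g)) :=
  ax8_iff_cofibrations_closed_under_exponentiation_general I cof
end

section
/- For every Γ : Type, A1 : Γ → Type and A2 : (Σ x : Γ, A1 x) → Type there is a function isFibΣ : isFib A1 → isFib A2 → isFib (fun x => Σ a1 : A1 x, A2 ⟨x, a1⟩), and it is stable under reindexing: for every γ : Δ → Γ, (isFibΣ α1 α2)[γ] = isFibΣ (α1[γ]) (α2[γ ×' id]), where γ ×' id : (Σ x : Δ, A1 (γ x)) → (Σ x : Γ, A1 x) sends ⟨x, a⟩ to ⟨γ x, a⟩. -/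
namespace CCHM

variable {I : Type}

/-- The two endpoints of the interval: `false ↦ i0`, `true ↦ i1`;
negation `!e` swaps the endpoints. -/
def pt (i0 i1 : I) : Bool → I := fun e => bif e then i1 else i0

/-- A composition structure for an `I`-indexed family of types:
any cofibrant partial path extended at endpoint `e` is extended at the other
endpoint `!e`. -/
def Comp (i0 i1 : I) (cof : Prop → Prop) (e : Bool) (A : I → Type) : Type :=
  (φ : Prop) → cof φ → (f : φ → (i : I) → A i) →
    (a0 : A (pt i0 i1 e)) → (∀ u : φ, f u (pt i0 i1 e) = a0) →
    { a1 : A (pt i0 i1 (!e)) // ∀ u : φ, f u (pt i0 i1 (!e)) = a1 }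

/-- A (CCHM) fibration structure on a family `A : Γ → Type`. -/
def isFib (i0 i1 : I) (cof : Prop → Prop) {Γ : Type} (A : Γ → Type) : Type :=
  (e : Bool) → (p : I → Γ) → Comp i0 i1 cof e (fun i => A (p i))

/-- Reindexing of fibration structures: `α[γ] e p := α e (γ ∘ p)`. -/
def reind (i0 i1 : I) (cof : Prop → Prop) {Δ Γ : Type} {A : Γ → Type}
    (γ : Δ → Γ) (α : isFib i0 i1 cof A) : isFib i0 i1 cof (fun x => A (γ x)) :=
  fun e p => α e (fun i => γ (p i))

/-!
Composition for a Σ-type is done in two stages. First the `A1`-components of the partial path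
and of the base point are filled to a whole path `a : (i : I) → A1 (p i)` in `A1`: the filler at
`i` is the composite of `α1` along the connection path `j ↦ cnx i j` (or `dsj i j`) from the base
endpoint to `i`, of the partial element that is the given one on `φ` and the constant base point
on `i = e`. Then `α2` composes the `A2`-components along `i ↦ ⟨p i, a i⟩`.
The construction at a path `p` consults `α1` and `α2` only at paths lying over `p`, so it commutes
with reindexing definitionally.
-/

theorem Sigma.eq_mk_of_cast_snd {α : Type} {β : α → Type} {s : Sigma β} {a : α} {b : β a}
    (h : s.1 = a) (hb : cast (congrArg β h) s.2 = b) : s = ⟨a, b⟩ := by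
  subst h hb
  rfl

theorem Sigma.cast_snd_eq_of_eq {α : Type} {β : α → Type} {s t : Sigma β} {a : α} (hst : s = t)
    (hs : s.1 = a) (ht : t.1 = a) : cast (congrArg β hs) s.2 = cast (congrArg β ht) t.2 := by
  subst hst
  rfl

theorem Or.by_cases_inr {φ ψ : Prop} [Decidable φ] {X : Sort*} {f : φ → X} {g : ψ → X}
    (hfg : ∀ v w, f v = g w) (w : ψ) : (Or.inr w : φ ∨ ψ).by_cases f g = g w := by
  unfold Or.by_cases
  split_ifs with v
  exacts [hfg v w, rfl]

section Connection

variable {i0 i1 : I} {cnx dsj : I → I → I}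

/-- `conn cnx dsj e i` is a path from the endpoint `pt i0 i1 e` to `i`. -/
def conn (cnx dsj : I → I → I) (e : Bool) : I → I → I := bif e then dsj else cnx

theorem conn_apply_pt_self
    (ax3 : ∀ x, cnx i0 x = i0 ∧ cnx x i0 = i0 ∧ cnx i1 x = x ∧ cnx x i1 = x)
    (ax4 : ∀ x, dsj i0 x = x ∧ dsj x i0 = x ∧ dsj i1 x = i1 ∧ dsj x i1 = i1)
    (e : Bool) (i : I) : conn cnx dsj e i (pt i0 i1 e) = pt i0 i1 e := by
  cases e
  exacts [(ax3 i).2.1, (ax4 i).2.2.2]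

theorem conn_apply_pt_not
    (ax3 : ∀ x, cnx i0 x = i0 ∧ cnx x i0 = i0 ∧ cnx i1 x = x ∧ cnx x i1 = x)
    (ax4 : ∀ x, dsj i0 x = x ∧ dsj x i0 = x ∧ dsj i1 x = i1 ∧ dsj x i1 = i1)
    (e : Bool) (i : I) : conn cnx dsj e i (pt i0 i1 (!e)) = i := by
  cases e
  exacts [(ax3 i).2.2.2, (ax4 i).2.1]

theorem conn_pt_self
    (ax3 : ∀ x, cnx i0 x = i0 ∧ cnx x i0 = i0 ∧ cnx i1 x = x ∧ cnx x i1 = x)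
    (ax4 : ∀ x, dsj i0 x = x ∧ dsj x i0 = x ∧ dsj i1 x = i1 ∧ dsj x i1 = i1)
    (e : Bool) (j : I) : conn cnx dsj e (pt i0 i1 e) j = pt i0 i1 e := by
  cases e
  exacts [(ax3 j).1, (ax4 j).2.2.1]

end Connection

theorem cof_eq_pt {i0 i1 : I} {cof : Prop → Prop} (ax5 : ∀ i : I, cof (i = i0) ∧ cof (i = i1))
    (e : Bool) (i : I) : cof (i = pt i0 i1 e) := by
  cases e
  exacts [(ax5 i).1, (ax5 i).2]

def Fill (i0 i1 : I) (cof : Prop → Prop) (e : Bool) (A : I → Type) : Type :=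
  (φ : Prop) → cof φ → (f : φ → (i : I) → A i) →
    (a0 : A (pt i0 i1 e)) → (∀ u : φ, f u (pt i0 i1 e) = a0) →
    { a : (i : I) → A i // (∀ u : φ, f u = a) ∧ a (pt i0 i1 e) = a0 }

section Tube

variable {i0 i1 : I} {cnx dsj : I → I → I}
  (ax3 : ∀ x, cnx i0 x = i0 ∧ cnx x i0 = i0 ∧ cnx i1 x = x ∧ cnx x i1 = x)
  (ax4 : ∀ x, dsj i0 x = x ∧ dsj x i0 = x ∧ dsj i1 x = i1 ∧ dsj x i1 = i1)
  {A : I → Type} {e : Bool} {φ : Prop} (f : φ → (i : I) → A i) (a0 : A (pt i0 i1 e))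

open Classical in
/-- The partial element on `φ ∨ i = e` along the connection path from `e` to `i`: the given one
on `φ`, the constant `a0` on `i = e`. -/
noncomputable def fillTube (i : I) (u : φ ∨ i = pt i0 i1 e) (j : I) : A (conn cnx dsj e i j) :=
  u.by_cases (fun v => f v (conn cnx dsj e i j))
    (fun h => cast (congrArg A (by subst h; exact (conn_pt_self ax3 ax4 e j).symm)) a0)

variable {f a0}

theorem fillTube_inl (i : I) (v : φ) (j : I) :
    fillTube ax3 ax4 f a0 i (.inl v) j = f v (conn cnx dsj e i j) :=
  dif_pos v

open Classical in
theorem fillTube_inr (hf : ∀ v : φ, f v (pt i0 i1 e) = a0) (j : I) :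
    HEq (fillTube ax3 ax4 f a0 (pt i0 i1 e) (.inr rfl) j) a0 := by
  refine (heq_of_eq (Or.by_cases_inr (fun v _ => ?_) rfl)).trans (cast_heq _ _)
  exact eq_of_heq <| (congr_arg_heq (f v) (conn_pt_self ax3 ax4 e j)).trans <|
    (heq_of_eq (hf v)).trans (cast_heq _ _).symm

theorem fillTube_base (hf : ∀ v : φ, f v (pt i0 i1 e) = a0) (i : I) (u : φ ∨ i = pt i0 i1 e) :
    fillTube ax3 ax4 f a0 i u (pt i0 i1 e) =
      cast (congrArg A (conn_apply_pt_self ax3 ax4 e i).symm) a0 := by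
  refine eq_of_heq (HEq.trans ?_ (cast_heq _ _).symm)
  rcases u with v | rfl
  · rw [fillTube_inl]
    exact (congr_arg_heq (f v) (conn_apply_pt_self ax3 ax4 e i)).trans (heq_of_eq (hf v))
  · exact fillTube_inr ax3 ax4 hf _

end Tube

section Filling

variable {i0 i1 : I} {cof : Prop → Prop} {cnx dsj : I → I → I}
  (ax3 : ∀ x, cnx i0 x = i0 ∧ cnx x i0 = i0 ∧ cnx i1 x = x ∧ cnx x i1 = x)
  (ax4 : ∀ x, dsj i0 x = x ∧ dsj x i0 = x ∧ dsj i1 x = i1 ∧ dsj x i1 = i1)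
  (ax5 : ∀ i : I, cof (i = i0) ∧ cof (i = i1))
  (ax6 : ∀ φ ψ : Prop, cof φ → cof ψ → cof (φ ∨ ψ))
  {A : I → Type} (α : isFib i0 i1 cof A) (e : Bool) {φ : Prop} (hφ : cof φ)
  (f : φ → (i : I) → A i) (a0 : A (pt i0 i1 e)) (hf : ∀ v : φ, f v (pt i0 i1 e) = a0)

noncomputable def fillComp (i : I) :
    { a : A (conn cnx dsj e i (pt i0 i1 (!e))) //
      ∀ u, fillTube ax3 ax4 f a0 i u (pt i0 i1 (!e)) = a } :=
  α e (conn cnx dsj e i) _ (ax6 _ _ hφ (cof_eq_pt ax5 e i)) (fillTube ax3 ax4 f a0 i) _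
    (fillTube_base ax3 ax4 hf i)

noncomputable def fillPath (i : I) : A i :=
  cast (congrArg A (conn_apply_pt_not ax3 ax4 e i)) (fillComp ax3 ax4 ax5 ax6 α e hφ f a0 hf i).1

theorem fillPath_extends (v : φ) : f v = fillPath ax3 ax4 ax5 ax6 α e hφ f a0 hf := by
  funext i
  have hv := (fillComp ax3 ax4 ax5 ax6 α e hφ f a0 hf i).2 (.inl v)
  rw [fillTube_inl ax3 ax4 i v] at hv
  exact eq_of_heq <| (congr_arg_heq (f v) (conn_apply_pt_not ax3 ax4 e i).symm).trans <|
    (heq_of_eq hv).trans (cast_heq _ _).symm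

theorem fillPath_pt : fillPath ax3 ax4 ax5 ax6 α e hφ f a0 hf (pt i0 i1 e) = a0 :=
  eq_of_heq <| (cast_heq _ _).trans <|
    (heq_of_eq ((fillComp ax3 ax4 ax5 ax6 α e hφ f a0 hf _).2 (.inr rfl))).symm.trans
      (fillTube_inr ax3 ax4 hf _)

noncomputable def isFib.fill : Fill i0 i1 cof e A := fun _ hφ f a0 hf =>
  ⟨fillPath ax3 ax4 ax5 ax6 α e hφ f a0 hf, fillPath_extends ax3 ax4 ax5 ax6 α e hφ f a0 hf,
    fillPath_pt ax3 ax4 ax5 ax6 α e hφ f a0 hf⟩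

end Filling

section Sigma

variable {i0 i1 : I} {cof : Prop → Prop} {cnx dsj : I → I → I}
  (ax3 : ∀ x, cnx i0 x = i0 ∧ cnx x i0 = i0 ∧ cnx i1 x = x ∧ cnx x i1 = x)
  (ax4 : ∀ x, dsj i0 x = x ∧ dsj x i0 = x ∧ dsj i1 x = i1 ∧ dsj x i1 = i1)
  (ax5 : ∀ i : I, cof (i = i0) ∧ cof (i = i1))
  (ax6 : ∀ φ ψ : Prop, cof φ → cof ψ → cof (φ ∨ ψ))
  {Γ : Type} {A1 : Γ → Type} {A2 : (Σ x : Γ, A1 x) → Type}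

noncomputable def isFib.sigma (α1 : isFib i0 i1 cof A1) (α2 : isFib i0 i1 cof A2) :
    isFib i0 i1 cof (fun x => Σ a1 : A1 x, A2 ⟨x, a1⟩) := fun e p φ hφ f c0 hf =>
  let a := isFib.fill ax3 ax4 ax5 ax6 (reind i0 i1 cof p α1) e φ hφ (fun v i => (f v i).1) c0.1
    (fun v => congrArg Sigma.fst (hf v))
  let b := α2 e (fun i => ⟨p i, a.1 i⟩) φ hφ
    (fun v i => cast (congrArg (fun a1 => A2 ⟨p i, a1⟩) (congrFun (a.2.1 v) i)) (f v i).2)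
    (cast (congrArg (fun a1 => A2 ⟨p (pt i0 i1 e), a1⟩) a.2.2.symm) c0.2)
    (fun v => Sigma.cast_snd_eq_of_eq (hf v) (congrFun (a.2.1 v) _) a.2.2.symm)
  ⟨⟨a.1 (pt i0 i1 (!e)), b.1⟩, fun v => Sigma.eq_mk_of_cast_snd (congrFun (a.2.1 v) _) (b.2 v)⟩

theorem reind_sigma {Δ : Type} (γ : Δ → Γ) (α1 : isFib i0 i1 cof A1) (α2 : isFib i0 i1 cof A2) :
    reind i0 i1 cof γ (isFib.sigma ax3 ax4 ax5 ax6 α1 α2) =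
      isFib.sigma ax3 ax4 ax5 ax6 (reind i0 i1 cof γ α1)
        (reind i0 i1 cof (fun y : Σ x : Δ, A1 (γ x) => (⟨γ y.1, y.2⟩ : Σ x : Γ, A1 x)) α2) :=
  rfl

end Sigma

theorem fib_sigma_general (i0 i1 : I) (cof : Prop → Prop)
    (cnx dsj : I → I → I)
    (ax3 : ∀ x, cnx i0 x = i0 ∧ cnx x i0 = i0 ∧ cnx i1 x = x ∧ cnx x i1 = x)
    (ax4 : ∀ x, dsj i0 x = x ∧ dsj x i0 = x ∧ dsj i1 x = i1 ∧ dsj x i1 = i1)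
    (ax5 : ∀ i : I, cof (i = i0) ∧ cof (i = i1))
    (ax6 : ∀ φ ψ : Prop, cof φ → cof ψ → cof (φ ∨ ψ)) :
    ∃ isFibSigma : {Γ : Type} → {A1 : Γ → Type} → {A2 : (Σ x : Γ, A1 x) → Type} →
        isFib i0 i1 cof A1 → isFib i0 i1 cof A2 →
        isFib i0 i1 cof (fun x => Σ a1 : A1 x, A2 ⟨x, a1⟩),
      ∀ (Δ Γ : Type) (A1 : Γ → Type) (A2 : (Σ x : Γ, A1 x) → Type)
        (α1 : isFib i0 i1 cof A1) (α2 : isFib i0 i1 cof A2) (γ : Δ → Γ),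
        reind i0 i1 cof γ (isFibSigma α1 α2) =
          isFibSigma (reind i0 i1 cof γ α1)
            (reind i0 i1 cof
              (fun y : Σ x : Δ, A1 (γ x) => (⟨γ y.1, y.2⟩ : Σ x : Γ, A1 x)) α2) :=
  ⟨isFib.sigma ax3 ax4 ax5 ax6, fun _ _ _ _ _ _ γ => reind_sigma ax3 ax4 ax5 ax6 γ _ _⟩

/-- Fibration structures lift through Σ-types, stably under reindexing. -/
theorem fib_sigma (i0 i1 : I) (cof : Prop → Prop)
    (ax2 : i0 ≠ i1)
    (cnx dsj : I → I → I)
    (ax3 : ∀ x, cnx i0 x = i0 ∧ cnx x i0 = i0 ∧ cnx i1 x = x ∧ cnx x i1 = x)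
    (ax4 : ∀ x, dsj i0 x = x ∧ dsj x i0 = x ∧ dsj i1 x = i1 ∧ dsj x i1 = i1)
    (ax5 : ∀ i : I, cof (i = i0) ∧ cof (i = i1))
    (ax6 : ∀ φ ψ : Prop, cof φ → cof ψ → cof (φ ∨ ψ)) :
    ∃ isFibSigma : {Γ : Type} → {A1 : Γ → Type} → {A2 : (Σ x : Γ, A1 x) → Type} →
        isFib i0 i1 cof A1 → isFib i0 i1 cof A2 →
        isFib i0 i1 cof (fun x => Σ a1 : A1 x, A2 ⟨x, a1⟩),
      ∀ (Δ Γ : Type) (A1 : Γ → Type) (A2 : (Σ x : Γ, A1 x) → Type)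
        (α1 : isFib i0 i1 cof A1) (α2 : isFib i0 i1 cof A2) (γ : Δ → Γ),
        reind i0 i1 cof γ (isFibSigma α1 α2) =
          isFibSigma (reind i0 i1 cof γ α1)
            (reind i0 i1 cof
              (fun y : Σ x : Δ, A1 (γ x) => (⟨γ y.1, y.2⟩ : Σ x : Γ, A1 x)) α2) :=
  fib_sigma_general i0 i1 cof cnx dsj ax3 ax4 ax5 ax6

end CCHM
end
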